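/- arXiv:2110.04531 — 2 statements merged into one kernel-verified Lean document; each statement's English description precedes it below -/
import Mathlib

section
/- Fix d ≥ 2, N ≥ 1, T > 0, ε ≥ 0. Let σ ∈ {−1,1}^{Λ_N} with σ_o = −1, and let 𝒜_σ ⊂ Λ_N be the simply connected component enclosed by the outermost boundary of the sign component of the origin. Then the joint density ν^+ of the field and spin configuration under ℚ^+ satisfies the exact identity ν^+(h, σ) / ν^+(h^{𝒜_σ}, σ^{𝒜_σ}) = e^{−(2/T)|∂𝒜_σ|} · Z^+(h^{𝒜_σ}) / Z^+(h). -/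
open MeasureTheory ProbabilityTheory Real

namespace RFIM

/-- the lattice `ℤ^d`. -/
abbrev V (d : ℕ) := Fin d → ℤ

/-- `u ∼ v` iff their `ℓ¹`-distance is `1`. -/
def adj {d : ℕ} (u v : V d) : Prop := (∑ i, |u i - v i|) = 1

instance {d : ℕ} (u v : V d) : Decidable (adj u v) := by
  unfold adj; infer_instance

/-- the nearest-neighbor graph on `ℤ^d`. -/
def latticeGraph (d : ℕ) : SimpleGraph (V d) where
  Adj u v := adj u v
  symm := by
    constructor
    intro u v h
    unfold adj at h ⊢
    rw [← h]
    exact Finset.sum_congr rfl fun i _ => abs_sub_comm _ _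
  loopless := by
    constructor
    intro u h
    unfold adj at h
    simp at h

/-- the box `Λ_N = [-N,N]^d ∩ ℤ^d`. -/
noncomputable def box (d N : ℕ) : Finset (V d) :=
  Finset.Icc (fun _ => -(N : ℤ)) (fun _ => (N : ℤ))

/-- the number of neighbors of `u` lying outside `Λ`. -/
noncomputable def nbrOut {d : ℕ} (Λ : Finset (V d)) (u : V d) : ℕ :=
  ((Finset.Icc (u - 1) (u + 1)).filter fun v => adj u v ∧ v ∉ Λ).card

/-- the size `|∂A|` of the edge boundary `∂A = {(u,v) : u ∼ v, u ∈ A, v ∉ A}`. -/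
noncomputable def bdry {d : ℕ} (A : Finset (V d)) : ℕ :=
  ∑ u ∈ A, ((Finset.Icc (u - 1) (u + 1)).filter fun v => adj u v ∧ v ∉ A).card

/-- the spin value `±1` attached to a Boolean. -/
noncomputable def spin (b : Bool) : ℝ := if b then 1 else -1

/-- a configuration on `Λ`, extended by `+1` (i.e. `true`) outside `Λ`. -/
def extCfg {d : ℕ} (Λ : Finset (V d)) (σ : Λ → Bool) : V d → Bool :=
  fun v => if h : v ∈ Λ then σ ⟨v, h⟩ else true

/-- the RFIM Hamiltonian `H^{η,Λ,εh}(σ)` on `Λ`, with boundary condition `η = ±1` and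
external field `ε h`.  (The interior sum is over ordered pairs, whence the factor `1/2`.) -/
noncomputable def ham {d : ℕ} (Λ : Finset (V d)) (η ε : ℝ) (h : V d → ℝ) (σ : Λ → Bool) : ℝ :=
  -((1/2) * ∑ u ∈ Λ, ∑ v ∈ Λ.filter (fun v => adj u v), spin (extCfg Λ σ u) * spin (extCfg Λ σ v)
    + η * ∑ u ∈ Λ, (nbrOut Λ u : ℝ) * spin (extCfg Λ σ u)
    + ∑ u ∈ Λ, ε * h u * spin (extCfg Λ σ u))

/-- the partition function `Z^η_{T,Λ}(εh)`. -/
noncomputable def Zf {d : ℕ} (Λ : Finset (V d)) (η T ε : ℝ) (h : V d → ℝ) : ℝ :=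
  ∑ σ : Λ → Bool, exp (-(ham Λ η ε h σ) / T)

open Classical in
/-- the Gibbs probability `μ^η_{T,Λ,εh}(p)` of an event `p`. -/
noncomputable def gibbsProb {d : ℕ} (Λ : Finset (V d)) (η T ε : ℝ) (h : V d → ℝ)
    (p : (Λ → Bool) → Prop) : ℝ :=
  (∑ σ : Λ → Bool, if p σ then exp (-(ham Λ η ε h σ) / T) else 0) / Zf Λ η T ε h

/-- the Gibbs expectation `⟨f⟩_{μ^η_{T,Λ,εh}}`. -/
noncomputable def gibbsExp {d : ℕ} (Λ : Finset (V d)) (η T ε : ℝ) (h : V d → ℝ)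
    (f : (Λ → Bool) → ℝ) : ℝ :=
  (∑ σ : Λ → Bool, f σ * exp (-(ham Λ η ε h σ) / T)) / Zf Λ η T ε h

/-- the field `h^A`, with the sign of `h` flipped exactly on `A`. -/
def flipField {d : ℕ} (A : Finset (V d)) (h : V d → ℝ) : V d → ℝ :=
  fun v => if v ∈ A then -h v else h v

/-- the configuration `σ^A`, with spins flipped exactly on `A`. -/
def flipCfg {d : ℕ} (A : Finset (V d)) {Λ : Finset (V d)} (σ : Λ → Bool) : Λ → Bool :=
  fun v => if (v : V d) ∈ A then !(σ v) else σ v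

/-- the free energy difference `Δ_A(h) = -T log Z⁺(h) + T log Z⁺(h^A)`. -/
noncomputable def Δ {d : ℕ} (Λ : Finset (V d)) (T ε : ℝ) (A : Finset (V d)) (h : V d → ℝ) : ℝ :=
  -T * log (Zf Λ 1 T ε h) + T * log (Zf Λ 1 T ε (flipField A h))

/-- the law of an i.i.d. standard Gaussian field indexed by `S`. -/
noncomputable def gaussField {d : ℕ} (S : Finset (V d)) : Measure (S → ℝ) :=
  Measure.pi fun _ => gaussianReal 0 1

/-- the field on `ℤ^d` equal to `ω` on `S` and to `g` off `S`. -/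
def fieldFrom {d : ℕ} (S : Finset (V d)) (g : V d → ℝ) (ω : S → ℝ) : V d → ℝ :=
  fun v => if h : v ∈ S then ω ⟨v, h⟩ else g v

/-- `A` is simply connected: both `A` and its complement induce connected subgraphs. -/
def SimplyConnected {d : ℕ} (A : Finset (V d)) : Prop :=
  ((latticeGraph d).induce (A : Set (V d))).Connected ∧
  ((latticeGraph d).induce ((A : Set (V d))ᶜ)).Connected

/-- the collection `𝔄` of simply connected subsets of `Λ_N` containing the origin. -/
def goodSets (d N : ℕ) : Set (Finset (V d)) :=
  {A | A ⊆ box d N ∧ (0 : V d) ∈ A ∧ SimplyConnected A}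

/-- the joint density `ν⁺(h,σ)` of field and spins under `ℚ⁺`. -/
noncomputable def nuPlus {d : ℕ} (Λ : Finset (V d)) (T ε : ℝ) (h : V d → ℝ)
    (σ : Λ → Bool) : ℝ :=
  (∏ u ∈ Λ, (1 / Real.sqrt (2 * π)) * exp (-(h u)^2 / 2)) *
    exp (-(ham Λ 1 ε h σ) / T) / Zf Λ 1 T ε h

/-!
Flipping the field and the spins together on `A ⊆ Λ` leaves the Gaussian weight of the field and
the field term `Σ ε h_u σ_u` of the Hamiltonian unchanged, so only the bonds across `∂A` feel the
flip. Each of them joins a minus spin in `A` to a plus spin outside (the plus boundary condition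
included), so the flip turns each of these `|∂A|` unsatisfied bonds into a satisfied one and lowers
the energy by exactly `2|∂A|`. In the ratio of the two densities the Gaussian factors cancel and
only this energy difference and the two partition functions remain.
-/

lemma adj_symm {d : ℕ} {u v : V d} (h : adj u v) : adj v u :=
  (latticeGraph d).adj_symm h

lemma mem_Icc_of_adj {d : ℕ} {u v : V d} (h : adj u v) :
    v ∈ Finset.Icc (u - 1) (u + 1) := by
  rw [Finset.mem_Icc]
  have hle : ∀ i, |u i - v i| ≤ 1 := fun i =>
    h ▸ Finset.single_le_sum (f := fun j => |u j - v j|) (fun j _ => abs_nonneg _)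
      (Finset.mem_univ i)
  constructor <;> intro i <;>
  · have := abs_le.mp (hle i)
    simp only [Pi.sub_apply, Pi.add_apply, Pi.one_apply]
    omega

lemma spin_not (b : Bool) : spin (!b) = -spin b := by
  cases b <;> simp [spin]

lemma flipField_sq {d : ℕ} (A : Finset (V d)) (h : V d → ℝ) (u : V d) :
    flipField A h u ^ 2 = h u ^ 2 := by
  unfold flipField
  split_ifs <;> simp

lemma Zf_pos {d : ℕ} (Λ : Finset (V d)) (η T ε : ℝ) (h : V d → ℝ) :
    0 < Zf Λ η T ε h :=
  Finset.sum_pos (fun _ _ => exp_pos _) Finset.univ_nonempty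

lemma sum_sum_filter_adj_comm {d : ℕ} (Λ : Finset (V d)) (f : V d → V d → ℝ) :
    ∑ u ∈ Λ, ∑ v ∈ Λ.filter (fun v => adj u v), f v u =
      ∑ u ∈ Λ, ∑ v ∈ Λ.filter (fun v => adj u v), f u v := by
  simp only [Finset.sum_filter]
  rw [Finset.sum_comm]
  refine Finset.sum_congr rfl fun u _ => Finset.sum_congr rfl fun v _ => ?_
  exact if_congr ⟨adj_symm, adj_symm⟩ rfl rfl

section Flip

variable {d : ℕ} {Λ A : Finset (V d)}

def MinusInsidePlusOutside (A : Finset (V d)) (σ : Λ → Bool) : Prop :=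
  ∀ u v : V d, u ∈ A → v ∉ A → adj u v → extCfg Λ σ u = false ∧ extCfg Λ σ v = true

lemma card_adj_not_mem_eq (hAΛ : A ⊆ Λ) (u : V d) :
    ((Finset.Icc (u - 1) (u + 1)).filter fun v => adj u v ∧ v ∉ A).card
      = (Λ.filter fun v => adj u v ∧ v ∉ A).card + nbrOut Λ u := by
  rw [← Finset.card_filter_add_card_filter_not (p := fun v => v ∈ Λ)]
  congr 2
  · ext v
    simp only [Finset.mem_filter]
    exact ⟨fun ⟨⟨_, huv, hvA⟩, hv⟩ => ⟨hv, huv, hvA⟩,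
      fun ⟨hv, huv, hvA⟩ => ⟨⟨mem_Icc_of_adj huv, huv, hvA⟩, hv⟩⟩
  · ext v
    simp only [Finset.mem_filter]
    exact ⟨fun ⟨⟨hI, huv, _⟩, hv⟩ => ⟨hI, huv, hv⟩,
      fun ⟨hI, huv, hv⟩ => ⟨⟨hI, huv, fun hvA => hv (hAΛ hvA)⟩, hv⟩⟩

lemma bdry_eq_sum (hAΛ : A ⊆ Λ) :
    (bdry A : ℝ) = ∑ u ∈ A, (((Λ.filter fun v => adj u v ∧ v ∉ A).card : ℝ) + nbrOut Λ u) := by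
  unfold bdry
  push_cast
  exact Finset.sum_congr rfl fun u _ => by rw [card_adj_not_mem_eq hAΛ u]; push_cast; rfl

lemma spin_extCfg_flipCfg (hAΛ : A ⊆ Λ) (σ : Λ → Bool) (v : V d) :
    spin (extCfg Λ (flipCfg A σ) v) =
      if v ∈ A then -spin (extCfg Λ σ v) else spin (extCfg Λ σ v) := by
  unfold extCfg flipCfg
  by_cases hv : v ∈ Λ
  · split_ifs <;> simp [spin_not]
  · have hvA : v ∉ A := fun hvA => hv (hAΛ hvA)
    simp [hv, hvA]

lemma flipField_mul_spin_flipCfg (hAΛ : A ⊆ Λ) (h : V d → ℝ) (σ : Λ → Bool) (u : V d) :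
    flipField A h u * spin (extCfg Λ (flipCfg A σ) u) = h u * spin (extCfg Λ σ u) := by
  rw [spin_extCfg_flipCfg hAΛ]
  unfold flipField
  split_ifs <;> ring

lemma nbrOut_mul_spin_flipCfg (hAΛ : A ⊆ Λ) {σ : Λ → Bool} (hσ : MinusInsidePlusOutside A σ)
    (u : V d) :
    (nbrOut Λ u : ℝ) * spin (extCfg Λ (flipCfg A σ) u) =
      nbrOut Λ u * spin (extCfg Λ σ u) + if u ∈ A then 2 * (nbrOut Λ u : ℝ) else 0 := by
  rw [spin_extCfg_flipCfg hAΛ]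
  split_ifs with huA
  · obtain h0 | ⟨v, hv⟩ := (nbrOut Λ u).eq_zero_or_pos.imp id Finset.card_pos.mp
    · simp [h0]
    simp only [Finset.mem_filter] at hv
    rw [(hσ u v huA (fun hvA => hv.2.2 (hAΛ hvA)) hv.2.1).1]
    simp only [spin, Bool.false_eq_true, if_false]
    ring
  · ring

lemma spin_mul_spin_flipCfg (hAΛ : A ⊆ Λ) {σ : Λ → Bool} (hσ : MinusInsidePlusOutside A σ)
    {u v : V d} (huv : adj u v) :
    spin (extCfg Λ (flipCfg A σ) u) * spin (extCfg Λ (flipCfg A σ) v) =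
      spin (extCfg Λ σ u) * spin (extCfg Λ σ v) +
        ((if u ∈ A ∧ v ∉ A then 2 else 0) + (if v ∈ A ∧ u ∉ A then 2 else 0)) := by
  rw [spin_extCfg_flipCfg hAΛ, spin_extCfg_flipCfg hAΛ]
  by_cases huA : u ∈ A <;> by_cases hvA : v ∈ A
  · simp [huA, hvA]
  · obtain ⟨hu, hv⟩ := hσ u v huA hvA huv
    norm_num [huA, hvA, hu, hv, spin]
  · obtain ⟨hv, hu⟩ := hσ v u hvA huA (adj_symm huv)
    norm_num [huA, hvA, hu, hv, spin]
  · simp [huA, hvA]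

lemma sum_sum_adj_ite_mem_not_mem (hAΛ : A ⊆ Λ) :
    ∑ u ∈ Λ, ∑ v ∈ Λ.filter (fun v => adj u v), (if u ∈ A ∧ v ∉ A then (2 : ℝ) else 0) =
      2 * ∑ u ∈ A, ((Λ.filter fun v => adj u v ∧ v ∉ A).card : ℝ) := by
  have inner : ∀ u, ∑ v ∈ Λ.filter (fun v => adj u v), (if u ∈ A ∧ v ∉ A then (2 : ℝ) else 0)
      = if u ∈ A then 2 * ((Λ.filter fun v => adj u v ∧ v ∉ A).card : ℝ) else 0 := by
    intro u
    by_cases huA : u ∈ A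
    · simp only [huA, true_and, if_true]
      rw [← Finset.sum_filter, Finset.filter_filter, Finset.sum_const, nsmul_eq_mul, mul_comm]
    · simp [huA]
  simp only [inner]
  rw [Finset.sum_ite_mem, Finset.inter_eq_right.mpr hAΛ, Finset.mul_sum]

lemma sum_interaction_flipCfg (hAΛ : A ⊆ Λ) {σ : Λ → Bool} (hσ : MinusInsidePlusOutside A σ) :
    ∑ u ∈ Λ, ∑ v ∈ Λ.filter (fun v => adj u v),
        spin (extCfg Λ (flipCfg A σ) u) * spin (extCfg Λ (flipCfg A σ) v) =
      ∑ u ∈ Λ, ∑ v ∈ Λ.filter (fun v => adj u v), spin (extCfg Λ σ u) * spin (extCfg Λ σ v) +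
        4 * ∑ u ∈ A, ((Λ.filter fun v => adj u v ∧ v ∉ A).card : ℝ) := by
  have pair : ∀ u ∈ Λ, ∀ v ∈ Λ.filter (fun v => adj u v), _ := fun u _ v hv =>
    spin_mul_spin_flipCfg hAΛ hσ (Finset.mem_filter.mp hv).2
  rw [Finset.sum_congr rfl fun u hu => Finset.sum_congr rfl (pair u hu)]
  simp only [Finset.sum_add_distrib]
  rw [sum_sum_filter_adj_comm Λ fun u v => if u ∈ A ∧ v ∉ A then (2 : ℝ) else 0,
    sum_sum_adj_ite_mem_not_mem hAΛ]
  ring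

theorem ham_flipField_flipCfg (hAΛ : A ⊆ Λ) (ε : ℝ) (h : V d → ℝ) {σ : Λ → Bool}
    (hσ : MinusInsidePlusOutside A σ) :
    ham Λ 1 ε (flipField A h) (flipCfg A σ) = ham Λ 1 ε h σ - 2 * (bdry A : ℝ) := by
  have field : ∑ u ∈ Λ, ε * flipField A h u * spin (extCfg Λ (flipCfg A σ) u) =
      ∑ u ∈ Λ, ε * h u * spin (extCfg Λ σ u) :=
    Finset.sum_congr rfl fun u _ => by rw [mul_assoc, flipField_mul_spin_flipCfg hAΛ, mul_assoc]
  have boundaryCondition : ∑ u ∈ Λ, (nbrOut Λ u : ℝ) * spin (extCfg Λ (flipCfg A σ) u) =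
      ∑ u ∈ Λ, (nbrOut Λ u : ℝ) * spin (extCfg Λ σ u) + 2 * ∑ u ∈ A, (nbrOut Λ u : ℝ) := by
    rw [Finset.sum_congr rfl fun u _ => nbrOut_mul_spin_flipCfg hAΛ hσ u, Finset.sum_add_distrib,
      Finset.sum_ite_mem, Finset.inter_eq_right.mpr hAΛ, Finset.mul_sum]
  unfold ham
  rw [sum_interaction_flipCfg hAΛ hσ, field, boundaryCondition, bdry_eq_sum hAΛ,
    Finset.sum_add_distrib]
  ring

end Flip

theorem rfim_density_identity_general (d N : ℕ)
    (T ε : ℝ) (h : V d → ℝ) (σ : box d N → Bool)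
    (A : Finset (V d)) (hA : A ∈ goodSets d N)
    (hbd : ∀ u v : V d, u ∈ A → v ∉ A → adj u v →
      extCfg (box d N) σ u = false ∧ extCfg (box d N) σ v = true) :
    nuPlus (box d N) T ε h σ / nuPlus (box d N) T ε (flipField A h) (flipCfg A σ) =
      exp (-(2/T) * (bdry A : ℝ)) *
        (Zf (box d N) 1 T ε (flipField A h) / Zf (box d N) 1 T ε h) := by
  have hZ := Zf_pos (box d N) 1 T ε h
  have hZ' := Zf_pos (box d N) 1 T ε (flipField A h)
  have hG : 0 < ∏ u ∈ box d N, (1 / Real.sqrt (2 * π)) * exp (-(h u) ^ 2 / 2) :=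
    Finset.prod_pos fun u _ => by positivity
  have hH : exp (-(ham (box d N) 1 ε h σ) / T) = exp (-(2/T) * (bdry A : ℝ)) *
      exp (-(ham (box d N) 1 ε (flipField A h) (flipCfg A σ)) / T) := by
    rw [ham_flipField_flipCfg hA.1 ε h hbd, ← exp_add]
    ring_nf
  have hH' := exp_pos (-(ham (box d N) 1 ε (flipField A h) (flipCfg A σ)) / T)
  unfold nuPlus
  simp only [flipField_sq]
  rw [hH]
  field_simp

/-- **The key density identity for the Peierls map.**  If `σ_o = -1` and `A = 𝒜_σ` is the
simply connected component enclosed by the outermost boundary of the sign component of the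
origin — so that `A ∈ 𝔄` and every boundary edge `(u,v) ∈ ∂A` has `σ_u = -1`, `σ_v = +1`
(with `σ ≡ +1` off `Λ_N`) — then
`ν⁺(h,σ)/ν⁺(h^A,σ^A) = e^{-(2/T)|∂A|} · Z⁺(h^A)/Z⁺(h)`. -/
theorem rfim_density_identity (d N : ℕ) (hd : 2 ≤ d) (hN : 1 ≤ N)
    (T ε : ℝ) (hT : 0 < T) (hε : 0 ≤ ε) (h : V d → ℝ) (σ : box d N → Bool)
    (hσo : extCfg (box d N) σ 0 = false)
    (A : Finset (V d)) (hA : A ∈ goodSets d N)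
    (hbd : ∀ u v : V d, u ∈ A → v ∉ A → adj u v →
      extCfg (box d N) σ u = false ∧ extCfg (box d N) σ v = true) :
    nuPlus (box d N) T ε h σ / nuPlus (box d N) T ε (flipField A h) (flipCfg A σ) =
      exp (-(2/T) * (bdry A : ℝ)) *
        (Zf (box d N) 1 T ε (flipField A h) / Zf (box d N) 1 T ε h) :=
  rfim_density_identity_general d N T ε h σ A hA hbd

end RFIM
end

section
/- Fix d ≥ 2, 𝗊 ≥ 3, N ≥ 1, T > 0, ε ≥ 0. Let σ ∈ {𝟣,…,𝗊}^{Λ_N} with σ_o = 𝟤, and let 𝒜_σ ⊂ Λ_N be the simply connected component enclosed by the outermost boundary of the connected component of spin-𝟤 vertices containing the origin. Then the joint density ν^𝟣 under ℚ^𝟣 satisfies ν^𝟣(h,σ) / ( Σ_{𝗃=𝟣}^{𝗊−𝟣} ν^𝟣(h^{𝒜_σ,𝗃}, σ^{𝒜_σ,𝗃}) ) ≤ e^{−|∂𝒜_σ|/((𝗊−𝟣)T)} · sup_{𝟣 ≤ 𝗃 ≤ 𝗊−𝟣} ( Z^𝟣(h^{𝒜_σ,𝗃}) / Z^𝟣(h)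 ). This uses the identity Σ_{𝗃=𝟣}^{𝗊−𝟣} Σ_{(u,v)∈∂𝒜_σ} 1_{σ^{𝒜_σ,𝗃}_u = σ_v} = |∂𝒜_σ|. -/
open MeasureTheory ProbabilityTheory Real

namespace RFIM

/-- a Potts configuration on `Λ`, extended by the boundary state `k1` outside `Λ`. -/
def pExt {d q : ℕ} (Λ : Finset (V d)) (k1 : Fin q) (σ : Λ → Fin q) : V d → Fin q :=
  fun v => if h : v ∈ Λ then σ ⟨v, h⟩ else k1

/-- the RFPM Hamiltonian `H^{k1,Λ,εh}(σ)` with boundary condition `k1` and fields `ε h_{k,·}`.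
(The interior sum is over ordered pairs, whence the factor `1/2`.) -/
noncomputable def pHam {d q : ℕ} (Λ : Finset (V d)) (k1 : Fin q) (ε : ℝ)
    (h : Fin q → V d → ℝ) (σ : Λ → Fin q) : ℝ :=
  -((1/2) * ∑ u ∈ Λ, ∑ v ∈ Λ.filter (fun v => adj u v),
      (if pExt Λ k1 σ u = pExt Λ k1 σ v then (1:ℝ) else 0)
    + ∑ u ∈ Λ, (nbrOut Λ u : ℝ) * (if pExt Λ k1 σ u = k1 then (1:ℝ) else 0)
    + ∑ u ∈ Λ, ε * h (pExt Λ k1 σ u) u)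

/-- the Potts partition function `Z^{k1}_{T,Λ}(εh)`. -/
noncomputable def pZ {d q : ℕ} (Λ : Finset (V d)) (k1 : Fin q) (T ε : ℝ)
    (h : Fin q → V d → ℝ) : ℝ :=
  ∑ σ : Λ → Fin q, exp (-(pHam Λ k1 ε h σ) / T)

open Classical in
/-- the Potts Gibbs probability `μ^{k1}_{T,Λ,εh}(p)` of an event `p`. -/
noncomputable def pGibbsProb {d q : ℕ} (Λ : Finset (V d)) (k1 : Fin q) (T ε : ℝ)
    (h : Fin q → V d → ℝ) (p : (Λ → Fin q) → Prop) : ℝ :=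
  (∑ σ : Λ → Fin q, if p σ then exp (-(pHam Λ k1 ε h σ) / T) else 0) / pZ Λ k1 T ε h

/-- the rotated field `h^{A,j}`: on `A`, `h^{A,j}_{k,v} = h_{θ^{-j}(k),v} = h_{k+j,v}`,
where `θ(k) = k - 1` is the cyclic rotation. -/
def rotField {d q : ℕ} (A : Finset (V d)) (j : Fin q) (h : Fin q → V d → ℝ) :
    Fin q → V d → ℝ :=
  fun k v => if v ∈ A then h (k + j) v else h k v

/-- the rotated configuration `σ^{A,j}`: on `A`, `σ^{A,j}_v = θ^j(σ_v) = σ_v - j`. -/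
def rotCfg {d q : ℕ} (A : Finset (V d)) (j : Fin q) {Λ : Finset (V d)} (σ : Λ → Fin q) :
    Λ → Fin q :=
  fun v => if (v : V d) ∈ A then σ v - j else σ v

/-- the Potts free energy difference `Δ_{A,j}(h) = -T log Z¹(h) + T log Z¹(h^{A,j})`. -/
noncomputable def pΔ {d q : ℕ} (Λ : Finset (V d)) (k1 : Fin q) (T ε : ℝ)
    (A : Finset (V d)) (j : Fin q) (h : Fin q → V d → ℝ) : ℝ :=
  -T * log (pZ Λ k1 T ε h) + T * log (pZ Λ k1 T ε (rotField A j h))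

/-- the law of i.i.d. standard Gaussian fields `(h_{k,v})` indexed by `Fin q × S`. -/
noncomputable def pGaussField {d : ℕ} (q : ℕ) (S : Finset (V d)) :
    Measure (Fin q × S → ℝ) :=
  Measure.pi fun _ => gaussianReal 0 1

/-- the fields on `ℤ^d` equal to `ω` on `S` and to `g` off `S`. -/
def pFieldFrom {d : ℕ} (q : ℕ) (S : Finset (V d)) (g : Fin q → V d → ℝ)
    (ω : Fin q × S → ℝ) : Fin q → V d → ℝ :=
  fun k v => if h : v ∈ S then ω (k, ⟨v, h⟩) else g k v

/-- the joint density `ν^{k1}(h,σ)` of field and spins under `ℚ^{k1}`. -/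
noncomputable def pNu {d q : ℕ} (Λ : Finset (V d)) (k1 : Fin q) (T ε : ℝ)
    (h : Fin q → V d → ℝ) (σ : Λ → Fin q) : ℝ :=
  (∏ u ∈ Λ, ∏ i : Fin q, (1 / Real.sqrt (2 * π)) * exp (-(h i u)^2 / 2)) *
    exp (-(pHam Λ k1 ε h σ) / T) / pZ Λ k1 T ε h

/-!
Rotating both the spins and the fields on `A` by `j` leaves the Gaussian weight of the field
and the field energy unchanged. Since the spins disagree along every edge of `∂A`, the number
of agreeing edges can only grow, so the Hamiltonian drops by the number `B_j` (`bdryGain`)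
of boundary edges along which the rotated spins agree; the normalisations contribute
`Z¹(h^{A,j}) / Z¹(h)`. A boundary edge `(u,v)` becomes agreeing for exactly one `j ≠ 0`,
namely `j = σ_u - σ_v`, so `∑_j B_j = |∂A|` and some `B_j` is at least `|∂A| / (q - 1)`;
keeping only that term of the denominator gives the bound.
-/

section Lattice

variable {d : ℕ}

lemma adj_comm (u v : V d) : adj u v ↔ adj v u := (latticeGraph d).adj_comm u v

lemma adj_mem_Icc {u v : V d} (huv : adj u v) : v ∈ Finset.Icc (u - 1) (u + 1) := by
  have hle (i : Fin d) : |u i - v i| ≤ 1 :=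
    huv ▸ Finset.single_le_sum (f := fun k => |u k - v k|) (fun _ _ => abs_nonneg _)
      (Finset.mem_univ i)
  rw [Finset.mem_Icc]
  constructor <;> intro i <;> have := abs_le.mp (hle i) <;>
    simp only [Pi.sub_apply, Pi.add_apply, Pi.one_apply] <;> omega

lemma sum_adj_comm {M : Type*} [AddCommMonoid M] (Λ : Finset (V d)) (F : V d → V d → M) :
    ∑ u ∈ Λ, ∑ v ∈ Λ.filter (fun v => adj u v), F u v =
      ∑ u ∈ Λ, ∑ v ∈ Λ.filter (fun v => adj u v), F v u := by
  simp only [Finset.sum_filter]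
  rw [Finset.sum_comm]
  exact Finset.sum_congr rfl fun u _ => Finset.sum_congr rfl fun v _ =>
    if_congr (adj_comm v u) rfl rfl

lemma card_filter_adj_split (Λ : Finset (V d)) (u : V d) (P : V d → Prop) [DecidablePred P] :
    ((Finset.Icc (u - 1) (u + 1)).filter fun v => adj u v ∧ P v).card =
      (Λ.filter fun v => adj u v ∧ P v).card +
        ((Finset.Icc (u - 1) (u + 1)).filter fun v => adj u v ∧ v ∉ Λ ∧ P v).card := by
  rw [← Finset.card_filter_add_card_filter_not (· ∈ Λ), Finset.filter_filter,
    Finset.filter_filter]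
  congr 2 <;> ext v <;> simp only [Finset.mem_filter]
  · exact ⟨fun ⟨_, huvP, hv⟩ => ⟨hv, huvP⟩, fun ⟨hv, huv, hP⟩ => ⟨adj_mem_Icc huv, ⟨huv, hP⟩, hv⟩⟩
  · tauto

end Lattice

section Rotation

variable {d q : ℕ}

def rotate (A : Finset (V d)) (j : Fin q) (τ : V d → Fin q) : V d → Fin q :=
  fun v => if v ∈ A then τ v - j else τ v

lemma pExt_rotCfg {Λ A : Finset (V d)} (hA : A ⊆ Λ) (k1 j : Fin q) (σ : Λ → Fin q) :
    pExt Λ k1 (rotCfg A j σ) = rotate A j (pExt Λ k1 σ) := by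
  ext1 v
  by_cases hv : v ∈ Λ
  · by_cases hvA : v ∈ A <;> simp [pExt, rotCfg, rotate, hv, hvA]
  · have hvA : v ∉ A := fun hvA => hv (hA hvA)
    simp [pExt, rotate, hv, hvA]

noncomputable def bdryGain (A : Finset (V d)) (τ : V d → Fin q) (j : Fin q) : ℕ :=
  ∑ u ∈ A, ((Finset.Icc (u - 1) (u + 1)).filter fun v => adj u v ∧ v ∉ A ∧ τ u - j = τ v).card

lemma prod_rotField [NeZero q] {M : Type*} [CommMonoid M] (Λ A : Finset (V d)) (j : Fin q)
    (h : Fin q → V d → ℝ) (f : ℝ → M) :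
    ∏ u ∈ Λ, ∏ i, f (rotField A j h i u) = ∏ u ∈ Λ, ∏ i, f (h i u) := by
  refine Finset.prod_congr rfl fun u _ => ?_
  by_cases hu : u ∈ A
  · exact Fintype.prod_equiv (Equiv.addRight j) _ _ fun i => by simp [rotField, hu]
  · simp [rotField, hu]

lemma rotField_rotate [NeZero q] (A : Finset (V d)) (j : Fin q) (h : Fin q → V d → ℝ)
    (τ : V d → Fin q) (u : V d) : rotField A j h (rotate A j τ u) u = h (τ u) u := by
  by_cases hu : u ∈ A <;> simp [rotField, rotate, hu]

lemma ite_rotate_eq [NeZero q] {A : Finset (V d)} {τ : V d → Fin q} (j : Fin q) {u v : V d}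
    (huv : u ∈ A → v ∉ A → τ u ≠ τ v) (hvu : v ∈ A → u ∉ A → τ v ≠ τ u) :
    (if rotate A j τ u = rotate A j τ v then (1 : ℝ) else 0) =
      (if τ u = τ v then 1 else 0) + (if u ∈ A ∧ v ∉ A ∧ τ u - j = τ v then 1 else 0) +
        (if v ∈ A ∧ u ∉ A ∧ τ v - j = τ u then 1 else 0) := by
  by_cases hu : u ∈ A <;> by_cases hv : v ∈ A
  · simp [rotate, hu, hv, sub_left_inj]
  · simp [rotate, hu, hv, huv hu hv]
  · simp [rotate, hu, hv, (hvu hv hu).symm, eq_comm (a := τ u)]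
  · simp [rotate, hu, hv]

end Rotation

section Hamiltonian

variable {d q : ℕ} {Λ A : Finset (V d)}

lemma sum_nbrOut_rotate (k1 : Fin q) (σ : Λ → Fin q) (hA : A ⊆ Λ) (j : Fin q)
    (hσ : ∀ u v, u ∈ A → v ∉ A → adj u v → pExt Λ k1 σ u ≠ pExt Λ k1 σ v) :
    ∑ u ∈ Λ, (nbrOut Λ u : ℝ) * (if rotate A j (pExt Λ k1 σ) u = k1 then 1 else 0) =
      ∑ u ∈ Λ, (nbrOut Λ u : ℝ) * (if pExt Λ k1 σ u = k1 then 1 else 0) +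
        ∑ u ∈ Λ, (nbrOut Λ u : ℝ) * (if u ∈ A ∧ pExt Λ k1 σ u - j = k1 then 1 else 0) := by
  rw [← Finset.sum_add_distrib]
  refine Finset.sum_congr rfl fun u _ => ?_
  by_cases hu : u ∈ A
  · obtain h0 | ⟨v, hv⟩ := (nbrOut Λ u).eq_zero_or_pos.imp_right Finset.card_pos.mp
    · simp [h0]
    obtain ⟨-, huv, hvΛ⟩ := Finset.mem_filter.mp hv
    have hne : pExt Λ k1 σ u ≠ k1 := by
      simpa [pExt, hvΛ] using hσ u v hu (fun hvA => hvΛ (hA hvA)) huv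
    simp [rotate, hu, hne]
  · simp [rotate, hu]

lemma bdryGain_eq (k1 : Fin q) (σ : Λ → Fin q) (hA : A ⊆ Λ) (j : Fin q) :
    (bdryGain A (pExt Λ k1 σ) j : ℝ) =
      ∑ u ∈ Λ, ∑ v ∈ Λ.filter (fun v => adj u v),
          (if u ∈ A ∧ v ∉ A ∧ pExt Λ k1 σ u - j = pExt Λ k1 σ v then (1 : ℝ) else 0) +
        ∑ u ∈ Λ, (nbrOut Λ u : ℝ) * (if u ∈ A ∧ pExt Λ k1 σ u - j = k1 then 1 else 0) := by
  set τ := pExt Λ k1 σ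
  have hout (u : V d) :
      ((Finset.Icc (u - 1) (u + 1)).filter fun v => adj u v ∧ v ∉ Λ ∧ v ∉ A ∧ τ u - j = τ v) =
        ((Finset.Icc (u - 1) (u + 1)).filter fun v => adj u v ∧ v ∉ Λ).filter
          fun _ => τ u - j = k1 := by
    rw [Finset.filter_filter]
    refine Finset.filter_congr fun v _ => ?_
    by_cases hv : v ∈ Λ
    · simp [hv]
    · have hvA : v ∉ A := fun hvA => hv (hA hvA)
      simp [τ, pExt, hv, hvA]
  rw [← Finset.sum_add_distrib, bdryGain, Nat.cast_sum]
  symm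
  refine (Finset.sum_subset hA fun u _ hu => ?_).symm.trans (Finset.sum_congr rfl fun u hu => ?_)
  · simp [hu]
  · rw [card_filter_adj_split Λ u, hout, Finset.filter_const]
    by_cases hj : τ u - j = k1 <;> simp [Finset.sum_boole, Finset.filter_filter, nbrOut, hu, hj]

variable [NeZero q]

lemma sum_bdryGain (τ : V d → Fin q) (hτ : ∀ u v, u ∈ A → v ∉ A → adj u v → τ u ≠ τ v) :
    ∑ j ∈ Finset.univ.filter (fun j : Fin q => j ≠ 0), bdryGain A τ j = bdry A := by
  unfold bdryGain bdry
  rw [Finset.sum_comm]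
  refine Finset.sum_congr rfl fun u hu => ?_
  -- each boundary edge `(u,v)` is counted exactly once, for the rotation `j = τ u - τ v`
  rw [Finset.card_eq_sum_card_fiberwise (f := fun v => τ u - τ v)
    (t := Finset.univ.filter (fun j : Fin q => j ≠ 0))]
  · refine Finset.sum_congr rfl fun j _ => ?_
    rw [Finset.filter_filter]
    congr 1
    refine Finset.filter_congr fun v _ => ?_
    rw [and_assoc, sub_eq_iff_eq_add, sub_eq_iff_eq_add, add_comm (τ v)]
  · intro v hv
    obtain ⟨-, huv, hv⟩ := Finset.mem_filter.mp hv
    simpa [sub_eq_zero] using hτ u v hu hv huv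

lemma sum_adj_rotate (τ : V d → Fin q) (j : Fin q)
    (hτ : ∀ u v, u ∈ A → v ∉ A → adj u v → τ u ≠ τ v) :
    ∑ u ∈ Λ, ∑ v ∈ Λ.filter (fun v => adj u v),
        (if rotate A j τ u = rotate A j τ v then (1 : ℝ) else 0) =
      ∑ u ∈ Λ, ∑ v ∈ Λ.filter (fun v => adj u v), (if τ u = τ v then (1 : ℝ) else 0) +
        2 * ∑ u ∈ Λ, ∑ v ∈ Λ.filter (fun v => adj u v),
          (if u ∈ A ∧ v ∉ A ∧ τ u - j = τ v then (1 : ℝ) else 0) := by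
  have hedge : ∀ u ∈ Λ, ∀ v ∈ Λ.filter (fun v => adj u v), _ := fun u _ v hv =>
    ite_rotate_eq j (fun hu hv' => hτ u v hu hv' (Finset.mem_filter.mp hv).2)
      (fun hv' hu => hτ v u hv' hu ((adj_comm u v).mp (Finset.mem_filter.mp hv).2))
  rw [Finset.sum_congr rfl fun u hu => Finset.sum_congr rfl (hedge u hu)]
  simp only [Finset.sum_add_distrib]
  rw [sum_adj_comm Λ fun v u => if u ∈ A ∧ v ∉ A ∧ τ u - j = τ v then (1 : ℝ) else 0]
  ring

lemma pHam_rotCfg (k1 : Fin q) (σ : Λ → Fin q) (hA : A ⊆ Λ) (ε : ℝ) (h : Fin q → V d → ℝ)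
    (j : Fin q) (hσ : ∀ u v, u ∈ A → v ∉ A → adj u v → pExt Λ k1 σ u ≠ pExt Λ k1 σ v) :
    pHam Λ k1 ε (rotField A j h) (rotCfg A j σ) =
      pHam Λ k1 ε h σ - bdryGain A (pExt Λ k1 σ) j := by
  simp only [pHam, pExt_rotCfg hA, rotField_rotate, sum_adj_rotate _ j hσ,
    sum_nbrOut_rotate k1 σ hA j hσ, bdryGain_eq k1 σ hA j]
  ring

end Hamiltonian

section Density

variable {d q : ℕ} {Λ A : Finset (V d)}

lemma pZ_pos (k1 : Fin q) (T ε : ℝ) (h : Fin q → V d → ℝ) : 0 < pZ Λ k1 T ε h :=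
  Finset.sum_pos (fun _ _ => exp_pos _) ⟨fun _ => k1, Finset.mem_univ _⟩

lemma pNu_pos (k1 : Fin q) (T ε : ℝ) (h : Fin q → V d → ℝ) (σ : Λ → Fin q) :
    0 < pNu Λ k1 T ε h σ := by
  unfold pNu
  have hZ := pZ_pos (Λ := Λ) k1 T ε h
  have hG : 0 < ∏ u ∈ Λ, ∏ i : Fin q, (1 / Real.sqrt (2 * π)) * exp (-(h i u)^2 / 2) :=
    Finset.prod_pos fun _ _ => Finset.prod_pos fun _ _ => by positivity
  positivity

lemma pNu_rotate [NeZero q] (k1 : Fin q) (T ε : ℝ) (h : Fin q → V d → ℝ) (σ : Λ → Fin q)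
    (hA : A ⊆ Λ) (j : Fin q)
    (hσ : ∀ u v, u ∈ A → v ∉ A → adj u v → pExt Λ k1 σ u ≠ pExt Λ k1 σ v) :
    pNu Λ k1 T ε (rotField A j h) (rotCfg A j σ) =
      pNu Λ k1 T ε h σ * (exp (bdryGain A (pExt Λ k1 σ) j / T) /
        (pZ Λ k1 T ε (rotField A j h) / pZ Λ k1 T ε h)) := by
  have hZ := (pZ_pos k1 T ε h (Λ := Λ)).ne'
  have hZj := (pZ_pos k1 T ε (rotField A j h) (Λ := Λ)).ne'
  have hexp : exp (-(pHam Λ k1 ε h σ - bdryGain A (pExt Λ k1 σ) j) / T) =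
      exp (-pHam Λ k1 ε h σ / T) * exp (bdryGain A (pExt Λ k1 σ) j / T) := by
    rw [← exp_add]; ring_nf
  unfold pNu
  rw [prod_rotField Λ A j h fun x => 1 / Real.sqrt (2 * π) * exp (-x ^ 2 / 2),
    pHam_rotCfg k1 σ hA ε h j hσ, hexp]
  field_simp

end Density

lemma inv_sum_exp_div_le {ι : Type*} {s : Finset ι} (hs : s.Nonempty) {b r : ι → ℝ} {c M : ℝ}
    (hr : ∀ j ∈ s, 0 < r j) (hrM : ∀ j ∈ s, r j ≤ M) (hb : s.card * c ≤ ∑ j ∈ s, b j) :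
    (∑ j ∈ s, exp (b j) / r j)⁻¹ ≤ exp (-c) * M := by
  obtain ⟨i, hi, hci⟩ := Finset.exists_le_of_sum_le hs (f := fun _ => c) (g := b)
    (by rwa [Finset.sum_const, nsmul_eq_mul])
  have hM : 0 < M := (hr i hi).trans_le (hrM i hi)
  have hterm : exp c / M ≤ ∑ j ∈ s, exp (b j) / r j :=
    calc exp c / M ≤ exp (b i) / r i :=
          div_le_div₀ (exp_pos _).le (exp_le_exp.mpr hci) (hr i hi) (hrM i hi)
      _ ≤ ∑ j ∈ s, exp (b j) / r j :=
          Finset.single_le_sum (fun j hj => (div_pos (exp_pos _) (hr j hj)).le) hi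
  calc (∑ j ∈ s, exp (b j) / r j)⁻¹ ≤ (exp c / M)⁻¹ := inv_anti₀ (by positivity) hterm
    _ = exp (-c) * M := by rw [inv_div, exp_neg, div_eq_inv_mul]

/-- **The key density inequality for the Potts Peierls map.**  If `σ_o = 𝟤` and
`A = 𝒜_σ` is the simply connected component enclosed by the outermost boundary of the
spin-`𝟤` component of the origin — so that `A ∈ 𝔄` and every boundary edge
`(u,v) ∈ ∂A` has `σ_u = 𝟤` and `σ_v ≠ 𝟤` (with `σ ≡ 𝟣` off `Λ_N`) — then
`ν¹(h,σ) / Σ_{j=𝟣}^{𝗊-𝟣} ν¹(h^{A,j},σ^{A,j}) ≤ e^{-|∂A|/((q-1)T)} · sup_j Z¹(h^{A,j})/Z¹(h)`.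
(States: `𝟣 = 0`, `𝟤 = 1` in `Fin q`; the rotation amounts `𝟣,…,𝗊-𝟣` are `j ≠ 0`.) -/
theorem rfpm_density_inequality (d q N : ℕ) (hq : 3 ≤ q)
    (T ε : ℝ)
    (h : Fin q → V d → ℝ) (σ : box d N → Fin q)
    (A : Finset (V d)) (hA : A ∈ goodSets d N)
    (hbd : ∀ u v : V d, u ∈ A → v ∉ A → adj u v →
      pExt (box d N) (⟨0, by omega⟩ : Fin q) σ u = ⟨1, by omega⟩ ∧
      pExt (box d N) (⟨0, by omega⟩ : Fin q) σ v ≠ ⟨1, by omega⟩) :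
    pNu (box d N) (⟨0, by omega⟩ : Fin q) T ε h σ /
        (∑ j ∈ Finset.univ.filter (fun j : Fin q => j ≠ ⟨0, by omega⟩),
          pNu (box d N) (⟨0, by omega⟩ : Fin q) T ε (rotField A j h) (rotCfg A j σ)) ≤
      exp (-(bdry A : ℝ) / (((q:ℝ) - 1) * T)) *
        ⨆ j : {j : Fin q // j ≠ ⟨0, by omega⟩},
          pZ (box d N) (⟨0, by omega⟩ : Fin q) T ε (rotField A (j : Fin q) h) /
            pZ (box d N) (⟨0, by omega⟩ : Fin q) T ε h := by
  have : NeZero q := ⟨by omega⟩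
  rw [show (⟨0, by omega⟩ : Fin q) = 0 from Fin.ext (Nat.zero_mod q).symm] at hbd ⊢
  have hσ u v (hu : u ∈ A) (hv : v ∉ A) (huv : adj u v) :
      pExt (box d N) 0 σ u ≠ pExt (box d N) 0 σ v :=
    (hbd u v hu hv huv).1 ▸ (hbd u v hu hv huv).2.symm
  have hcard : ((Finset.univ.filter fun j : Fin q => j ≠ 0).card : ℝ) = q - 1 := by
    rw [Finset.filter_ne', Finset.card_erase_of_mem (Finset.mem_univ _), Finset.card_univ,
      Fintype.card_fin, Nat.cast_pred (by omega)]
  have hq1 : (q : ℝ) - 1 ≠ 0 := by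
    have : (3 : ℝ) ≤ q := by exact_mod_cast hq
    linarith
  rw [Finset.sum_congr rfl fun j _ => pNu_rotate 0 T ε h σ hA.1 j hσ, ← Finset.mul_sum,
    div_mul_cancel_left₀ (pNu_pos 0 T ε h σ).ne', neg_div]
  refine inv_sum_exp_div_le ⟨1, by simpa using (by omega : q ≠ 1)⟩
    (fun j _ => div_pos (pZ_pos ..) (pZ_pos ..))
    (fun j hj => Finite.le_ciSup_of_le ⟨j, (Finset.mem_filter.mp hj).2⟩ le_rfl) (le_of_eq ?_)
  rw [hcard, ← Finset.sum_div, ← Nat.cast_sum, sum_bdryGain _ hσ, ← mul_div_assoc,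
    mul_div_mul_left _ _ hq1]

end RFIM
end
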